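/- arXiv:1404.2752 — 3 statements merged into one kernel-verified Lean document; each statement's English description precedes it below -/
import Mathlib

section
/- If Q ⊆ ℝ^n is a polytope that is the solution set of at most 5 linear inequalities (i.e., Q has at most 5 facets), then any affine image of Q has at most 6 vertices (extreme points). -/
/-!
Let `N(k, d)` bound the number of vertices of a `d`-dimensional polyhedron cut out by `k`
inequalities. A vertex is determined by the constraints tight at it, so for `d ≥ 2` it lies on at
least `d` facets, and each facet is a `(d - 1)`-dimensional polyhedron with `k - 1` constraints.
Double counting vertex–facet incidences gives `N(k, d) ≤ k · N(k - 1, d - 1) / d` (the recursion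
of `vertexBound`), and with `N(k, 0) = 1`, `N(k, 1) = 2` this yields `N(5, d) ≤ 6` for every `d`.
Every extreme point of the affine image of a compact convex set is the image of an extreme point
(Krein–Milman applied to a fibre), so the bound passes to affine images.
-/

open Module Set Filter Topology

section LinearAlgebra

variable {K V ι : Type*} [Field K] [AddCommGroup V] [Module K V]

theorem Submodule.finrank_le_card_of_forall_eq_zero (W : Submodule K V) (f : ι → V →ₗ[K] K)
    (t : Finset ι) (h : ∀ w ∈ W, (∀ i ∈ t, f i w = 0) → w = 0) : finrank K W ≤ t.card := by
  let g : W →ₗ[K] (t → K) := LinearMap.pi fun i => (f i).comp W.subtype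
  have hg : Function.Injective g := by
    refine (injective_iff_map_eq_zero g).2 fun w hw => Subtype.ext <| h w w.2 fun i hi => ?_
    exact congrFun hw ⟨i, hi⟩
  simpa using LinearMap.finrank_le_finrank_of_injective hg

theorem Submodule.finrank_inf_ker_add_one [FiniteDimensional K V] {W : Submodule K V}
    {f : V →ₗ[K] K} (hf : ¬ W ≤ LinearMap.ker f) :
    finrank K ↥(W ⊓ LinearMap.ker f) + 1 = finrank K W := by
  have hg : f.comp W.subtype ≠ 0 := fun h =>
    hf fun w hw => by simpa using LinearMap.congr_fun h ⟨w, hw⟩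
  rw [← Module.Dual.finrank_ker_add_one_of_ne_zero hg, LinearMap.ker_comp,
    ← Submodule.finrank_map_subtype_eq, Submodule.map_comap_subtype]

end LinearAlgebra

section ExtremePoints

variable {V : Type*} [AddCommGroup V] [Module ℝ V]

theorem eq_zero_of_mem_extremePoints_of_eventually_mem {A : Set V} {v w : V}
    (hv : v ∈ A.extremePoints ℝ) (hw : ∀ᶠ t in 𝓝 (0 : ℝ), v + t • w ∈ A) : w = 0 := by
  obtain ⟨ε, hε, hball⟩ := Metric.eventually_nhds_iff.1 hw
  have hmem : ∀ t : ℝ, |t| < ε → v + t • w ∈ A := fun t ht => hball (by simpa using ht)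
  have hseg : v ∈ openSegment ℝ (v + (ε / 2) • w) (v + (-(ε / 2)) • w) :=
    ⟨1 / 2, 1 / 2, by norm_num, by norm_num, by norm_num, by module⟩
  have hε2 : |ε / 2| < ε := by rw [abs_of_pos (half_pos hε)]; linarith
  have h := hv.2 (hmem _ hε2) (hmem _ (by rwa [abs_neg])) hseg
  rw [add_eq_left, smul_eq_zero] at h
  exact h.resolve_left (half_pos hε).ne'

theorem Collinear.encard_extremePoints_le_two {A : Set V} (hA : Collinear ℝ A) :
    (A.extremePoints ℝ).encard ≤ 2 := by
  by_cases h : (A.extremePoints ℝ).encard ≤ 1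
  · exact h.trans one_le_two
  obtain ⟨x, y, hx, hy, hxy⟩ := one_lt_encard_iff.1 (not_le.1 h)
  suffices A.extremePoints ℝ ⊆ {x, y} from (encard_le_encard this).trans (encard_pair hxy).le
  intro z hz
  have hcol : Collinear ℝ {x, y, z} := hA.subset <| by
    rintro u (rfl | rfl | rfl) <;> [exact hx.1; exact hy.1; exact hz.1]
  have between {u v w : V} (hv : v ∈ A.extremePoints ℝ) (hu : u ∈ A) (hw : w ∈ A)
      (h : Wbtw ℝ u v w) : u = v ∨ w = v :=
    (mem_extremePoints_iff_forall_segment.1 hv).2 u hu w hw h.mem_segment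
  rcases hcol.wbtw_or_wbtw_or_wbtw with h | h | h
  · rcases between hy hx.1 hz.1 h with h | h
    exacts [absurd h hxy, Or.inr h]
  · rcases between hz hy.1 hx.1 h with h | h
    exacts [Or.inr h.symm, Or.inl h.symm]
  · rcases between hx hz.1 hy.1 h with h | h
    exacts [Or.inl h, absurd h.symm hxy]

end ExtremePoints

theorem Set.encard_le_card_mul_div_of_forall_le_card {α ι : Type*} {E : Set α} {F : ι → Set α}
    {s : Finset ι} {m g : ℕ} (hm : 0 < m) (hF : ∀ i ∈ s, (F i).encard ≤ g)
    (hE : ∀ v ∈ E, ∃ t ⊆ s, m ≤ t.card ∧ ∀ i ∈ t, v ∈ F i) :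
    E.encard ≤ (s.card * g / m : ℕ) := by
  classical
  have hFfin : ∀ i ∈ s, (F i).Finite := fun i hi => finite_of_encard_le_coe (hF i hi)
  have hEfin : E.Finite := by
    refine (s.finite_toSet.biUnion hFfin).subset fun v hv => ?_
    obtain ⟨t, hts, hmt, hvt⟩ := hE v hv
    obtain ⟨i, hi⟩ := Finset.card_pos.1 (hm.trans_le hmt)
    exact mem_biUnion (hts hi) (hvt i hi)
  rw [hEfin.encard_eq_coe_toFinset_card, Nat.cast_le, Nat.le_div_iff_mul_le hm]
  refine Finset.card_mul_le_card_mul (fun v i => v ∈ F i) (fun v hv => ?_) (fun i hi => ?_)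
  · obtain ⟨t, hts, hmt, hvt⟩ := hE v (hEfin.mem_toFinset.1 hv)
    exact hmt.trans <| Finset.card_le_card fun i hi =>
      Finset.mem_filter.2 ⟨hts hi, hvt i hi⟩
  · have hsub : hEfin.toFinset.bipartiteBelow (fun v i => v ∈ F i) i ⊆ (hFfin i hi).toFinset :=
      fun v hv => (hFfin i hi).mem_toFinset.2 (Finset.mem_filter.1 hv).2
    have := hF i hi
    rw [(hFfin i hi).encard_eq_coe_toFinset_card, Nat.cast_le] at this
    exact (Finset.card_le_card hsub).trans this

def vertexBound : ℕ → ℕ → ℕ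
  | _, 0 => 1
  | _, 1 => 2
  | k, d + 2 => k * vertexBound (k - 1) (d + 1) / (d + 2)

theorem vertexBound_le : ∀ d, vertexBound 1 d ≤ 2 ∧ vertexBound 2 d ≤ 2 ∧ vertexBound 3 d ≤ 3 ∧
    vertexBound 4 d ≤ 4 ∧ vertexBound 5 d ≤ 6
  | 0 | 1 | 2 => by decide
  | d + 3 => by
    have hstep (k c : ℕ) (h : vertexBound k (d + 2) ≤ c) :
        vertexBound (k + 1) (d + 3) ≤ (k + 1) * c / 3 :=
      (Nat.div_le_div_left (by omega) (by omega)).trans <|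
        Nat.div_le_div_right (Nat.mul_le_mul_left _ h)
    obtain ⟨h1, h2, h3, h4, -⟩ := vertexBound_le (d + 2)
    exact ⟨(hstep 0 0 (by simp [vertexBound])).trans (by norm_num),
      (hstep 1 2 h1).trans (by norm_num), (hstep 2 2 h2).trans (by norm_num),
      (hstep 3 3 h3).trans le_rfl, (hstep 4 4 h4).trans le_rfl⟩

section Polyhedron

variable {V ι : Type*} [AddCommGroup V] [Module ℝ V] (a : ι → V →ₗ[ℝ] ℝ) (b : ι → ℝ)

def polyhedron (s : Finset ι) (p : V) (W : Submodule ℝ V) : Set V :=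
  {x | x - p ∈ W ∧ ∀ i ∈ s, a i x ≤ b i}

variable {a b} {s : Finset ι} {p q v w : V} {W : Submodule ℝ V}

theorem vectorSpan_polyhedron_le : vectorSpan ℝ (polyhedron a b s p W) ≤ W := by
  rw [vectorSpan_def, Submodule.span_le]
  rintro _ ⟨x, hx, y, hy, rfl⟩
  simpa using W.sub_mem hx.1 hy.1

theorem polyhedron_inter_eq [DecidableEq ι] {i : ι} (hq : q ∈ polyhedron a b s p W)
    (hqi : a i q = b i) :
    polyhedron a b s p W ∩ {x | a i x = b i} =
      polyhedron a b (s.erase i) q (W ⊓ LinearMap.ker (a i)) := by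
  ext x
  have hW : x - p ∈ W ↔ x - q ∈ W := by
    rw [← sub_sub_sub_cancel_right x q p, W.sub_mem_iff_left hq.1]
  have hker : a i x = b i ↔ a i (x - q) = 0 := by rw [map_sub, hqi, sub_eq_zero]
  simp only [polyhedron, mem_inter_iff, mem_ofPred_eq, Submodule.mem_inf, LinearMap.mem_ker,
    hW, ← hker, Finset.mem_erase]
  constructor
  · rintro ⟨⟨hxW, hxs⟩, hxi⟩
    exact ⟨⟨hxW, hxi⟩, fun j hj => hxs j hj.2⟩
  · rintro ⟨⟨hxW, hxi⟩, hxs⟩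
    refine ⟨⟨hxW, fun j hj => ?_⟩, hxi⟩
    obtain rfl | hji := eq_or_ne j i
    exacts [hxi.le, hxs j ⟨hji, hj⟩]

theorem eq_zero_of_mem_extremePoints_polyhedron
    (hv : v ∈ (polyhedron a b s p W).extremePoints ℝ) (hw : w ∈ W)
    (htight : ∀ i ∈ s, a i v = b i → a i w = 0) : w = 0 := by
  refine eq_zero_of_mem_extremePoints_of_eventually_mem hv ?_
  have hline : ∀ t : ℝ, v + t • w - p ∈ W := fun t => by
    simpa [add_sub_right_comm] using W.add_mem hv.1.1 (W.smul_mem t hw)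
  simp only [polyhedron, mem_ofPred_eq, hline, true_and, eventually_all_finset, map_add,
    map_smul, smul_eq_mul]
  intro i hi
  obtain hvi | hvi := (hv.1.2 i hi).eq_or_lt
  · exact Eventually.of_forall fun t => by simp [hvi, htight i hi hvi]
  · have : Tendsto (fun t : ℝ => a i v + t * a i w) (𝓝 0) (𝓝 (a i v)) :=
      Continuous.tendsto' (by fun_prop) 0 _ (by simp)
    exact this.eventually (eventually_le_nhds hvi)

theorem encard_extremePoints_polyhedron_le [DecidableEq ι] [FiniteDimensional ℝ V] :
    ∀ (d : ℕ) (s : Finset ι) (p : V) (W : Submodule ℝ V), finrank ℝ W = d →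
      ((polyhedron a b s p W).extremePoints ℝ).encard ≤ vertexBound s.card d
  | 0, s, p, W, hW => by
    rw [Submodule.finrank_eq_zero.1 hW]
    have : (polyhedron a b s p ⊥).extremePoints ℝ ⊆ {p} := fun x hx => by
      simpa [sub_eq_zero] using hx.1.1
    simpa [vertexBound] using (encard_le_encard this).trans (encard_singleton p).le
  | 1, s, p, W, hW => by
    have : Collinear ℝ (polyhedron a b s p W) := by
      rw [collinear_iff_finrank_le_one, ← hW]
      exact Submodule.finrank_mono vectorSpan_polyhedron_le
    simpa [vertexBound] using this.encard_extremePoints_le_two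
  | d + 2, s, p, W, hW => by
    classical
    -- constraints whose kernel contains `W` are constant on `p + W` and cut out no facet
    let s' := {i ∈ s | ¬ W ≤ LinearMap.ker (a i)}
    have hface : ∀ i ∈ s', ((polyhedron a b s p W ∩ {x | a i x = b i}).extremePoints ℝ).encard ≤
        vertexBound (s.card - 1) (d + 1) := by
      intro i hi
      obtain ⟨his, hiW⟩ := Finset.mem_filter.1 hi
      rcases (polyhedron a b s p W ∩ {x | a i x = b i}).eq_empty_or_nonempty with
        hempty | ⟨q, hq, hqi⟩
      · simp [hempty]
      rw [polyhedron_inter_eq hq hqi, ← Finset.card_erase_of_mem his]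
      refine encard_extremePoints_polyhedron_le (d + 1) _ q _ ?_
      have := Submodule.finrank_inf_ker_add_one hiW
      omega
    refine (encard_le_card_mul_div_of_forall_le_card (m := d + 2) (by omega) hface
      fun v hv => ⟨{i ∈ s' | a i v = b i}, Finset.filter_subset _ _, ?_, fun i hi => ?_⟩).trans ?_
    · rw [← hW]
      refine W.finrank_le_card_of_forall_eq_zero a _ fun w hw h0 =>
        eq_zero_of_mem_extremePoints_polyhedron hv hw fun i hi hvi => ?_
      by_cases hiW : W ≤ LinearMap.ker (a i)
      · exact hiW hw
      · exact h0 i (by simp [s', hi, hiW, hvi])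
    · exact inter_extremePoints_subset_extremePoints_of_subset inter_subset_left
        ⟨⟨hv.1, (Finset.mem_filter.1 hi).2⟩, hv⟩
    · exact Nat.cast_le.2 <| Nat.div_le_div_right <| Nat.mul_le_mul_right _ <|
        Finset.card_filter_le _ _

end Polyhedron

/-- If `Q ⊆ ℝ^n` is a polytope that is the solution set of at most 5 linear inequalities
(i.e. `Q` has at most 5 facets), then any affine image of `Q` has at most 6 vertices
(extreme points). -/
theorem stmt0 {n m : ℕ} (a : Fin 5 → ((Fin n → ℝ) →ₗ[ℝ] ℝ)) (b : Fin 5 → ℝ)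
    (Q : Set (Fin n → ℝ)) (hQ : Q = {x | ∀ i : Fin 5, a i x ≤ b i})
    (hbdd : Bornology.IsBounded Q)
    (f : (Fin n → ℝ) →ᵃ[ℝ] (Fin m → ℝ)) :
    (Set.extremePoints ℝ (f '' Q)).Finite ∧ (Set.extremePoints ℝ (f '' Q)).ncard ≤ 6 := by
  have hpoly : Q = polyhedron a b Finset.univ 0 ⊤ := by simp [hQ, polyhedron]
  have hclosed : IsClosed Q := by
    rw [hQ, ofPred_forall]
    exact isClosed_iInter fun i =>
      isClosed_le (a i).continuous_of_finiteDimensional continuous_const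
  have hQ6 : (Q.extremePoints ℝ).encard ≤ 6 := by
    rw [hpoly]
    refine (encard_extremePoints_polyhedron_le _ _ 0 ⊤ rfl).trans ?_
    exact_mod_cast (vertexBound_le _).2.2.2.2
  have himage := surjOn_extremePoints_image ⟨f, f.continuous_of_finiteDimensional⟩
    (Metric.isCompact_of_isClosed_isBounded hclosed hbdd)
  rw [← encard_le_coe_iff_finite_ncard_le]
  exact ((encard_le_encard himage).trans (encard_image_le _ _)).trans hQ6
end

section
/- Let w_1, w_2, w_3, w_4 ∈ ℝ^n be pairwise distinct points and π : ℝ^n → ℝ^2 a linear map such that exactly one pair among them has equal images under π, and such that the (three distinct) images are not collinear. Then the affine span of {w_1, w_2, w_3, w_4} has dimension 3. -/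
/-- Four pairwise distinct points in `ℝ^n` such that exactly one pair of them has equal
images under a linear map `π : ℝ^n → ℝ²`, with the three distinct images not collinear,
affinely span a space of dimension 3. -/
theorem stmt5 {n : ℕ} (w : Fin 4 → (Fin n → ℝ)) (hw : Function.Injective w)
    (π : (Fin n → ℝ) →ₗ[ℝ] (Fin 2 → ℝ))
    (i j : Fin 4) (hij : i ≠ j) (heq : π (w i) = π (w j))
    (huniq : ∀ k l : Fin 4, k ≠ l → π (w k) = π (w l) → ({k, l} : Set (Fin 4)) = {i, j})
    (hcol : ¬ Collinear ℝ (Set.range fun k : Fin 4 => π (w k))) :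
    Module.finrank ℝ (affineSpan ℝ (Set.range w)).direction = 3 := by
  classical
  -- the two indices other than i, j
  obtain ⟨k1, k2, hk12, hcompl⟩ : ∃ a b, a ≠ b ∧ ({i, j}ᶜ : Finset (Fin 4)) = {a, b} := by
    apply Finset.card_eq_two.mp
    rw [Finset.card_compl, Finset.card_pair hij]
    rfl
  have hk1 : k1 ∈ ({i, j}ᶜ : Finset (Fin 4)) := by rw [hcompl]; simp
  have hk2 : k2 ∈ ({i, j}ᶜ : Finset (Fin 4)) := by rw [hcompl]; simp
  simp only [Finset.mem_compl, Finset.mem_insert, Finset.mem_singleton, not_or] at hk1 hk2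
  have hik1 : i ≠ k1 := fun h => hk1.1 h.symm
  have hik2 : i ≠ k2 := fun h => hk2.1 h.symm
  have hjk1 : j ≠ k1 := fun h => hk1.2 h.symm
  have hjk2 : j ≠ k2 := fun h => hk2.2 h.symm
  have huniv : (Finset.univ : Finset (Fin 4)) = {i, j, k1, k2} := by
    rw [← Finset.union_compl ({i, j} : Finset (Fin 4)), hcompl]
    ext x; constructor <;> (intro h; simp only [Finset.mem_insert, Finset.mem_union, Finset.mem_singleton] at *; tauto)
  -- the three distinct image points
  set q : Fin 3 → (Fin 2 → ℝ) := ![π (w i), π (w k1), π (w k2)] with hq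
  have hrange : Set.range (fun k : Fin 4 => π (w k)) ⊆ Set.range q := by
    rintro - ⟨k, rfl⟩
    have hk : k ∈ (Finset.univ : Finset (Fin 4)) := Finset.mem_univ k
    rw [huniv] at hk
    simp only [Finset.mem_insert, Finset.mem_singleton] at hk
    rcases hk with rfl | rfl | rfl | rfl
    · exact ⟨0, by simp [hq]⟩
    · exact ⟨0, by simp [hq, heq]⟩
    · exact ⟨1, by simp [hq]⟩
    · exact ⟨2, by simp [hq]⟩
  have hqai : AffineIndependent ℝ q := by
    rw [affineIndependent_iff_not_collinear]
    exact fun h => hcol (h.subset hrange)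
  have hai : AffineIndependent ℝ w := by
    rw [affineIndependent_iff]
    intro s c hsum hcomb e he
    -- extend c by zero to all of Fin 4
    set c' : Fin 4 → ℝ := fun k => if k ∈ s then c k else 0 with hc'
    have hsum' : ∑ k, c' k = 0 := by
      rw [Finset.sum_ite_mem, Finset.univ_inter, hsum]
    have hcomb' : ∑ k, c' k • w k = 0 := by
      rw [← hcomb,
        ← Finset.sum_subset (Finset.subset_univ s) (fun x _ hx => by simp [hc', hx])]
      exact Finset.sum_congr rfl fun x hx => by simp [hc', hx]
    -- expand the two sums over the four indices
    have hsum4 : c' i + c' j + c' k1 + c' k2 = 0 := by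
      rw [← hsum', huniv]
      rw [Finset.sum_insert (by simp [hij, hik1, hik2]),
        Finset.sum_insert (by simp [hjk1, hjk2]),
        Finset.sum_insert (by simp [hk12]), Finset.sum_singleton]
      ring
    have hcomb4 : c' i • w i + c' j • w j + c' k1 • w k1 + c' k2 • w k2 = 0 := by
      rw [← hcomb', huniv]
      rw [Finset.sum_insert (by simp [hij, hik1, hik2]),
        Finset.sum_insert (by simp [hjk1, hjk2]),
        Finset.sum_insert (by simp [hk12]), Finset.sum_singleton]
      abel
    -- apply π
    have himg : (c' i + c' j) • π (w i) + c' k1 • π (w k1) + c' k2 • π (w k2) = 0 := by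
      have h0 : π (c' i • w i + c' j • w j + c' k1 • w k1 + c' k2 • w k2) = 0 := by
        rw [hcomb4]; exact map_zero π
      simp only [map_add, map_smul] at h0
      rw [← heq] at h0
      rw [add_smul]
      linear_combination (norm := module) h0
    -- coefficients for the three image points
    set d : Fin 3 → ℝ := ![c' i + c' j, c' k1, c' k2] with hd
    have hd0 : ∀ m, d m = 0 := by
      have := affineIndependent_iff.mp hqai Finset.univ d
        (by rw [Fin.sum_univ_three]; simp [hd]; linarith)
        (by rw [Fin.sum_univ_three]; simpa [hd, hq] using himg)
      exact fun m => this m (Finset.mem_univ m)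
    have hk1z : c' k1 = 0 := by simpa [hd] using hd0 1
    have hk2z : c' k2 = 0 := by simpa [hd] using hd0 2
    have hijz : c' i + c' j = 0 := by simpa [hd] using hd0 0
    -- now c' i • (w i - w j) = 0
    have hiz : c' i = 0 := by
      have hji : c' j = -c' i := by linarith
      have h1 : c' i • (w i - w j) = 0 := by
        have := hcomb4
        rw [hk1z, hk2z, hji] at this
        simpa [smul_sub, sub_eq_add_neg] using this
      rcases smul_eq_zero.mp h1 with h | h
      · exact h
      · exact absurd (hw (sub_eq_zero.mp h)) hij
    have hjz : c' j = 0 := by linarith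
    have hall : ∀ k, c' k = 0 := by
      intro k
      have hk : k ∈ (Finset.univ : Finset (Fin 4)) := Finset.mem_univ k
      rw [huniv] at hk
      simp only [Finset.mem_insert, Finset.mem_singleton] at hk
      rcases hk with rfl | rfl | rfl | rfl <;> assumption
    simpa [hc', he] using hall e
  have := hai.finrank_vectorSpan (by simp : Fintype.card (Fin 4) = 3 + 1)
  rwa [direction_affineSpan]
end

section
/- Let w_1, …, w_6 ∈ ℝ^3 be the vertices of a triangular prism Γ, labeled so that {w_1,w_2,w_3,w_4}, {w_3,w_4,w_5,w_6} and {w_1,w_2,w_5,w_6} each lie in a facet (a 2-dimensional face) of Γ, and suppose the lines w_1w_2 and w_3w_4 meet in a unique point p, the lines w_3w_4 and w_5w_6 meet in a unique point q. Then p = q; in particular the three lines w_1w_2, w_3w_4, w_5w_6 have a common point. -/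
/-- For the six vertices of a triangular prism labeled so that `{w₁,w₂,w₃,w₄}`,
`{w₃,w₄,w₅,w₆}` and `{w₁,w₂,w₅,w₆}` each lie in a (planar) facet, if the lines `w₁w₂` and
`w₃w₄` meet in the unique point `p` and the lines `w₃w₄` and `w₅w₆` meet in the unique
point `q`, then `p = q` (so the three lines have a common point).
(Indices are shifted by one: `w i` for `i = 0,…,5`.) -/
theorem stmt7 (w : Fin 6 → (Fin 3 → ℝ)) (hw : Function.Injective w)
    (h1234 : Coplanar ℝ {w 0, w 1, w 2, w 3})
    (h3456 : Coplanar ℝ {w 2, w 3, w 4, w 5})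
    (h1256 : Coplanar ℝ {w 0, w 1, w 4, w 5})
    (hfull : ¬ Coplanar ℝ (Set.range w))
    (p q : Fin 3 → ℝ)
    (hp : p ∈ affineSpan ℝ {w 0, w 1} ∧ p ∈ affineSpan ℝ {w 2, w 3})
    (hpu : ∀ x, x ∈ affineSpan ℝ {w 0, w 1} → x ∈ affineSpan ℝ {w 2, w 3} → x = p)
    (hq : q ∈ affineSpan ℝ {w 2, w 3} ∧ q ∈ affineSpan ℝ {w 4, w 5})
    (hqu : ∀ x, x ∈ affineSpan ℝ {w 2, w 3} → x ∈ affineSpan ℝ {w 4, w 5} → x = q) :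
    p = q := by
  by_contra hpq
  set P4 : AffineSubspace ℝ (Fin 3 → ℝ) :=
    affineSpan ℝ ({w 0, w 1, w 4, w 5} : Set (Fin 3 → ℝ)) with hP4
  have hpP : p ∈ P4 := by
    refine affineSpan_mono ℝ (s₁ := {w 0, w 1}) ?_ hp.1
    intro x hx
    simp only [Set.mem_insert_iff, Set.mem_singleton_iff] at hx
    rcases hx with rfl | rfl <;> simp
  have hqP : q ∈ P4 := by
    refine affineSpan_mono ℝ (s₁ := {w 4, w 5}) ?_ hq.2
    intro x hx
    simp only [Set.mem_insert_iff, Set.mem_singleton_iff] at hx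
    rcases hx with rfl | rfl <;> simp
  -- p and q both lie on the line through w 2 and w 3
  have hcol : Collinear ℝ ({p, q, w 2, w 3} : Set (Fin 3 → ℝ)) :=
    collinear_insert_insert_of_mem_affineSpan_pair hp.2 hq.1
  have h2 : w 2 ∈ line[ℝ, p, q] :=
    hcol.mem_affineSpan_of_mem_of_ne (by simp) (by simp) (by simp) hpq
  have h3 : w 3 ∈ line[ℝ, p, q] :=
    hcol.mem_affineSpan_of_mem_of_ne (by simp) (by simp) (by simp) hpq
  have hle : line[ℝ, p, q] ≤ P4 := by
    rw [affineSpan_le]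
    intro x hx
    rcases hx with h | h <;> simp_all
  have hsub : Set.range w ⊆ (P4 : Set (Fin 3 → ℝ)) := by
    rintro _ ⟨i, rfl⟩
    fin_cases i
    · exact subset_affineSpan ℝ _ (by simp)
    · exact subset_affineSpan ℝ _ (by simp)
    · exact hle h2
    · exact hle h3
    · exact subset_affineSpan ℝ _ (by simp)
    · exact subset_affineSpan ℝ _ (by simp)
  apply hfull
  refine Coplanar.subset hsub ?_
  have hvs : vectorSpan ℝ ((P4 : Set (Fin 3 → ℝ))) =
      vectorSpan ℝ ({w 0, w 1, w 4, w 5} : Set (Fin 3 → ℝ)) := by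
    rw [← AffineSubspace.direction_eq_vectorSpan, hP4, direction_affineSpan]
  unfold Coplanar
  rw [hvs]
  exact h1256
end
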